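/- arXiv:2412.20177 — 2 statements merged into one kernel-verified Lean document; each statement's English description precedes it below -/
import Mathlib

section
/- (Lemma 3 of the paper, correctness of MaxGrowth.) Let S = [CL₁, …, CLₙ] be a feasible sequence with n ≥ k. Then ⟨λ(S), [CL₁.c, …, CLₙ.c]⟩ is a relaxed co-movement pattern satisfying all four parameters m, k, d, and ε: |λ(S)| ≥ m, the route has length n ≥ k, λ(S) is ε-close at every camera of the route (via the positions pᵢ), and the route is a d-subpath of the travel path of every object of λ(S) (witnessed by the strictly increasing positions pᵢ(o) with gaps at most d + 1). -/
/-- A cluster: a finite set of objects, a camera, and a position map. -/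
structure Cluster (ι C : Type*) where
  O : Finset ι
  c : C
  p : ι → ℕ

variable {ι C : Type*}

/-- `CL` is a valid cluster w.r.t. parameters `m`, `ε` and the travel-path data
(`len` = path lengths, `cam` = camera maps, `s` = entrance timestamps). -/
def IsCluster (m : ℕ) (ε : ℝ) (len : ι → ℕ) (cam : ι → ℕ → C) (s : ι → ℕ → ℝ)
    (CL : Cluster ι C) : Prop :=
  m ≤ CL.O.card ∧
  (∀ o ∈ CL.O, CL.p o < len o ∧ cam o (CL.p o) = CL.c) ∧
  (∀ o ∈ CL.O, ∀ o' ∈ CL.O, |s o (CL.p o) - s o' (CL.p o')| ≤ ε)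

/-- `o` is a core object of the cluster sequence `S` (gap tolerance `d`). -/
def IsCore (d : ℕ) (S : List (Cluster ι C)) (o : ι) : Prop :=
  (∀ CL ∈ S, o ∈ CL.O) ∧
  S.Chain' fun CL CL' => 0 < CL'.p o - CL.p o ∧ CL'.p o - CL.p o ≤ d + 1

/-- `λ(S)`: the set of core objects of the cluster sequence `S`. -/
def coreSet (d : ℕ) (S : List (Cluster ι C)) : Set ι := {o | IsCore d S o}

/-- `CL` is a feasible cluster for the cluster sequence `S`: at least `m` objects
belong to `CL.O`, are core objects of `S`, and reach `CL` from the last cluster of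
`S` within gap tolerance `d`. -/
def FeasibleFor (m d : ℕ) (S : List (Cluster ι C)) (CL : Cluster ι C) : Prop :=
  ∃ CLn ∈ S.getLast?, ∃ T : Finset ι, m ≤ T.card ∧
    ∀ o ∈ T, o ∈ CL.O ∧ o ∈ coreSet d S ∧
      0 < CL.p o - CLn.p o ∧ CL.p o - CLn.p o ≤ d + 1

/-- `S` is a feasible sequence: it consists of a single cluster, or its last cluster
is a feasible cluster for the preceding prefix. -/
def FeasibleSeq (m d : ℕ) (S : List (Cluster ι C)) : Prop :=
  (∃ CL, S = [CL]) ∨ (∃ S' CL, S = S' ++ [CL] ∧ FeasibleFor m d S' CL)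

/-- `⟨O, P⟩` is a relaxed co-movement pattern (VPlatoon) for parameters `m`, `k`,
`d`, `ε`: `O` is a finite set of at least `m` objects, `P` has length at least `k`,
and there are witnessing positions `q` making `P` a `d`-subpath of every member's
travel path along which `O` is `ε`-close. -/
def IsPattern (m k d : ℕ) (ε : ℝ) (len : ι → ℕ) (cam : ι → ℕ → C) (s : ι → ℕ → ℝ)
    (O : Set ι) (P : List C) : Prop :=
  O.Finite ∧ m ≤ O.ncard ∧ k ≤ P.length ∧
  ∃ q : ι → ℕ → ℕ,
    (∀ o ∈ O, ∀ t : ℕ, (ht : t < P.length) → q o t < len o ∧ cam o (q o t) = P[t]) ∧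
    (∀ o ∈ O, ∀ t : ℕ, t + 1 < P.length →
      q o t < q o (t + 1) ∧ q o (t + 1) - q o t ≤ d + 1) ∧
    (∀ t : ℕ, t < P.length → ∀ o ∈ O, ∀ o' ∈ O, |s o (q o t) - s o' (q o' t)| ≤ ε)

/-- `P₁` is a `d`-subpath of `P₂` (as camera sequences): there is a strictly
increasing position map with consecutive gaps at most `d + 1` matching cameras. -/
def IsDSubpath (d : ℕ) (P₁ P₂ : List C) : Prop :=
  ∃ g : ℕ → ℕ,
    (∀ t : ℕ, (ht : t < P₁.length) → ∃ h : g t < P₂.length, P₁[t] = P₂[g t]) ∧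
    (∀ t : ℕ, t + 1 < P₁.length → g t < g (t + 1) ∧ g (t + 1) - g t ≤ d + 1)

/-! The positions `pₜ` of the clusters witness the pattern: a core object lies in every cluster, so
cluster validity gives the camera match and `ε`-closeness at each step, and the chain condition in
the definition of a core object gives the gaps. For `|λ(S)| ≥ m`, feasibility supplies `m` objects
(the whole single cluster, or the witness set `T` of the last extension) that are all core objects. -/

theorem coreSet_subset {d : ℕ} {S : List (Cluster ι C)} {CL : Cluster ι C} (h : CL ∈ S) :
    coreSet d S ⊆ CL.O :=
  fun _ ho => ho.1 CL h

theorem coreSet_finite {d : ℕ} {S : List (Cluster ι C)} (hS : S ≠ []) :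
    (coreSet d S).Finite :=
  (S.head hS).O.finite_toSet.subset (coreSet_subset (S.head_mem hS))

theorem coe_subset_coreSet_singleton (d : ℕ) (CL : Cluster ι C) :
    ↑CL.O ⊆ coreSet d [CL] := by
  intro o ho
  refine ⟨fun CL' h => ?_, List.isChain_singleton _⟩
  rwa [List.mem_singleton.mp h]

theorem mem_coreSet_append_singleton {d : ℕ} {S : List (Cluster ι C)} {CLn CL : Cluster ι C}
    (hlast : S.getLast? = some CLn) {o : ι} (ho : o ∈ coreSet d S) (hoCL : o ∈ CL.O)
    (hpos : 0 < CL.p o - CLn.p o) (hgap : CL.p o - CLn.p o ≤ d + 1) :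
    o ∈ coreSet d (S ++ [CL]) := by
  refine ⟨fun CL' h => ?_, List.isChain_append.mpr ⟨ho.2, List.isChain_singleton _, ?_⟩⟩
  · rcases List.mem_append.mp h with h | h
    · exact ho.1 CL' h
    · rwa [List.mem_singleton.mp h]
  · intro x hx y hy
    obtain rfl : x = CLn := Option.some.inj (hx.symm.trans hlast)
    obtain rfl : y = CL := Option.some.inj hy.symm
    exact ⟨hpos, hgap⟩

theorem FeasibleFor.subset_coreSet_append {m d : ℕ} {S : List (Cluster ι C)} {CL : Cluster ι C}
    (h : FeasibleFor m d S CL) : ∃ T : Finset ι, m ≤ T.card ∧ ↑T ⊆ coreSet d (S ++ [CL]) := by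
  obtain ⟨CLn, hlast, T, hT, hTcore⟩ := h
  refine ⟨T, hT, fun o ho => ?_⟩
  obtain ⟨hoCL, hocore, hpos, hgap⟩ := hTcore o ho
  exact mem_coreSet_append_singleton hlast hocore hoCL hpos hgap

theorem FeasibleSeq.ne_nil {m d : ℕ} {S : List (Cluster ι C)} (h : FeasibleSeq m d S) :
    S ≠ [] := by
  rcases h with ⟨CL, rfl⟩ | ⟨S', CL, rfl, -⟩ <;> simp

theorem FeasibleSeq.le_ncard_coreSet {m d : ℕ} {ε : ℝ} {len : ι → ℕ} {cam : ι → ℕ → C}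
    {s : ι → ℕ → ℝ} {S : List (Cluster ι C)} (hvalid : ∀ CL ∈ S, IsCluster m ε len cam s CL)
    (h : FeasibleSeq m d S) : m ≤ (coreSet d S).ncard := by
  obtain ⟨T, hT, hTS⟩ : ∃ T : Finset ι, m ≤ T.card ∧ ↑T ⊆ coreSet d S := by
    rcases h with ⟨CL, rfl⟩ | ⟨S', CL, rfl, hF⟩
    · exact ⟨CL.O, (hvalid CL (List.mem_singleton_self CL)).1,
        coe_subset_coreSet_singleton d CL⟩
    · exact hF.subset_coreSet_append
  calc m ≤ T.card := hT
    _ = (T : Set ι).ncard := (Set.ncard_coe_finset T).symm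
    _ ≤ (coreSet d S).ncard := Set.ncard_le_ncard hTS (coreSet_finite h.ne_nil)

theorem isPattern_coreSet {m k d : ℕ} {ε : ℝ} {len : ι → ℕ} {cam : ι → ℕ → C}
    {s : ι → ℕ → ℝ} {S : List (Cluster ι C)} (hvalid : ∀ CL ∈ S, IsCluster m ε len cam s CL)
    (hS : S ≠ []) (hm : m ≤ (coreSet d S).ncard) (hk : k ≤ S.length) :
    IsPattern m k d ε len cam s (coreSet d S) (S.map Cluster.c) := by
  have getD_eq {t : ℕ} (ht : t < S.length) : S.getD t (S.head hS) = S[t] :=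
    List.getD_eq_getElem S _ ht
  -- `S.head hS` is only a default for out-of-range `t`, where `q` is never inspected.
  refine ⟨coreSet_finite hS, hm, by simpa using hk, fun o t => (S.getD t (S.head hS)).p o,
    ?_, ?_, ?_⟩
  · intro o ho t ht
    rw [List.length_map] at ht
    have hmem := S.getElem_mem ht
    obtain ⟨hlt, hcam⟩ := (hvalid _ hmem).2.1 o (ho.1 _ hmem)
    simp only [getD_eq ht, List.getElem_map]
    exact ⟨hlt, hcam⟩
  · intro o ho t ht
    rw [List.length_map] at ht
    have hgap := List.isChain_iff_getElem.mp ho.2 t ht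
    simp only [getD_eq ht, getD_eq (Nat.lt_of_succ_lt ht)]
    omega
  · intro t ht o ho o' ho'
    rw [List.length_map] at ht
    have hmem := S.getElem_mem ht
    simp only [getD_eq ht]
    exact (hvalid _ hmem).2.2 o (ho.1 _ hmem) o' (ho'.1 _ hmem)

theorem maxGrowth_correct_general {ι C : Type*} (m k d : ℕ) (ε : ℝ)
    (len : ι → ℕ) (cam : ι → ℕ → C) (s : ι → ℕ → ℝ)
    (S : List (Cluster ι C))
    (hvalid : ∀ CL ∈ S, IsCluster m ε len cam s CL)
    (hfeas : FeasibleSeq m d S) (hk : k ≤ S.length) :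
    IsPattern m k d ε len cam s (coreSet d S) (S.map Cluster.c) :=
  isPattern_coreSet hvalid hfeas.ne_nil (hfeas.le_ncard_coreSet hvalid) hk

/-- Lemma 3 of the paper (correctness of MaxGrowth): for a feasible sequence
`S = [CL₁, …, CLₙ]` of valid clusters with `n ≥ k`, the pair
`⟨λ(S), [CL₁.c, …, CLₙ.c]⟩` is a relaxed co-movement pattern satisfying all
four parameters `m`, `k`, `d` and `ε`. -/
theorem maxGrowth_correct {ι C : Type*} (m k d : ℕ) (ε : ℝ) (hε : 0 ≤ ε)
    (len : ι → ℕ) (cam : ι → ℕ → C) (s : ι → ℕ → ℝ)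
    (hs : ∀ (o : ι) (i j : ℕ), i < j → j < len o → s o i < s o j)
    (S : List (Cluster ι C))
    (hvalid : ∀ CL ∈ S, IsCluster m ε len cam s CL)
    (hfeas : FeasibleSeq m d S) (hk : k ≤ S.length) :
    IsPattern m k d ε len cam s (coreSet d S) (S.map Cluster.c) :=
  maxGrowth_correct_general m k d ε len cam s S hvalid hfeas hk
end

section
/- (Lemma 4 of the paper, completeness of MaxGrowth.) Let ⟨O, P⟩ with P = [c₁, …, cₙ] be a relaxed co-movement pattern, witnessed by positions q₁(o) < ⋯ < qₙ(o) for each o ∈ O. Then there exists a cluster sequence S = [CL₁, …, CLₙ] such that for each t, CLₜ.c = cₜ and O ⊆ CLₜ.O, every nonempty prefix of S is a feasible sequence, and O ⊆ λ(S). (In fact one may take CLₜ = (O, cₜ, qₜ): each such triple is a cluster, each prefix [CL₁, …, CLₜ] is a feasible sequence, and every object of O is a core object of S.) -/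
variable {ι C : Type*}

/-!
The witness is the `t ↦ (O, cₜ, qₜ)` sequence. Each term is a cluster because `O` is
`ε`-close at `cₜ`, and every object of `O` is core because the `qₜ(o)` advance by between
`1` and `d + 1`. Feasibility then needs nothing more: in any sequence with at least `m`
core objects, those core objects witness that the last cluster of every nonempty prefix is
feasible for the part before it.
-/

theorem IsCore.of_prefix {d : ℕ} {S S₁ : List (Cluster ι C)} {o : ι} (h : IsCore d S o)
    (hpre : S₁ <+: S) : IsCore d S₁ o :=
  ⟨fun CL hCL => h.1 CL (hpre.subset hCL), h.2.prefix hpre⟩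

theorem feasibleSeq_of_prefix {m d : ℕ} {S S₁ : List (Cluster ι C)} (T : Finset ι)
    (hT : m ≤ T.card) (hcore : ∀ o ∈ T, IsCore d S o) (hne : S₁ ≠ []) (hpre : S₁ <+: S) :
    FeasibleSeq m d S₁ := by
  obtain ⟨S', CL, rfl⟩ : ∃ S' CL, S₁ = S' ++ [CL] := by
    simpa using (List.eq_nil_or_concat S₁).resolve_left hne
  cases hlast : S'.getLast? with
  | none => exact Or.inl ⟨CL, by simp_all⟩
  | some CLn =>
    refine Or.inr ⟨S', CL, rfl, CLn, hlast, T, hT, fun o ho => ?_⟩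
    have hcore₁ : IsCore d (S' ++ [CL]) o := (hcore o ho).of_prefix hpre
    have hstep := (List.isChain_append.mp hcore₁.2).2.2 CLn hlast CL rfl
    exact ⟨hcore₁.1 CL (by simp), hcore₁.of_prefix (List.prefix_append _ _), hstep⟩

def patternSeq (T : Finset ι) (P : List C) (q : ι → ℕ → ℕ) : List (Cluster ι C) :=
  P.mapIdx fun t c => ⟨T, c, fun o => q o t⟩

section patternSeq

variable {T : Finset ι} {P : List C} {q : ι → ℕ → ℕ}

theorem map_c_patternSeq : (patternSeq T P q).map Cluster.c = P := by
  apply List.ext_getElem <;> simp [patternSeq]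

theorem mem_patternSeq {CL : Cluster ι C} :
    CL ∈ patternSeq T P q ↔ ∃ (t : ℕ) (ht : t < P.length), CL = ⟨T, P[t], fun o => q o t⟩ := by
  simp only [patternSeq, List.mem_mapIdx, eq_comm]

theorem isCluster_of_mem_patternSeq {m : ℕ} {ε : ℝ} {len : ι → ℕ} {cam : ι → ℕ → C}
    {s : ι → ℕ → ℝ} (hT : m ≤ T.card)
    (hcam : ∀ o ∈ T, ∀ t : ℕ, (ht : t < P.length) → q o t < len o ∧ cam o (q o t) = P[t])
    (hclose : ∀ t < P.length, ∀ o ∈ T, ∀ o' ∈ T, |s o (q o t) - s o' (q o' t)| ≤ ε)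
    {CL : Cluster ι C} (hCL : CL ∈ patternSeq T P q) : IsCluster m ε len cam s CL := by
  obtain ⟨t, ht, rfl⟩ := mem_patternSeq.mp hCL
  exact ⟨hT, fun o ho => hcam o ho t ht, hclose t ht⟩

theorem isCore_patternSeq {d : ℕ} {o : ι} (ho : o ∈ T)
    (hgap : ∀ t : ℕ, t + 1 < P.length → q o t < q o (t + 1) ∧ q o (t + 1) - q o t ≤ d + 1) :
    IsCore d (patternSeq T P q) o := by
  refine ⟨fun CL hCL => ?_, List.isChain_iff_getElem.mpr fun t ht => ?_⟩
  · obtain ⟨t, ht, rfl⟩ := mem_patternSeq.mp hCL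
    exact ho
  · simpa [patternSeq] using hgap t (by simpa [patternSeq] using ht)

end patternSeq

theorem maxGrowth_complete_general {ι C : Type*} (m k d : ℕ) (ε : ℝ)
    (len : ι → ℕ) (cam : ι → ℕ → C) (s : ι → ℕ → ℝ)
    (O : Set ι) (P : List C)
    (hpat : IsPattern m k d ε len cam s O P) :
    ∃ S : List (Cluster ι C),
      S.map Cluster.c = P ∧
      (∀ CL ∈ S, IsCluster m ε len cam s CL) ∧
      (∀ CL ∈ S, O ⊆ (CL.O : Set ι)) ∧
      (∀ S₁ : List (Cluster ι C), S₁ ≠ [] → S₁ <+: S → FeasibleSeq m d S₁) ∧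
      O ⊆ coreSet d S := by
  obtain ⟨hfin, hm, -, q, hcam, hgap, hclose⟩ := hpat
  obtain ⟨T, rfl⟩ := hfin.exists_finset_coe
  have hT : m ≤ T.card := by rwa [Set.ncard_coe_finset] at hm
  have hcore : ∀ o ∈ T, IsCore d (patternSeq T P q) o := fun o ho =>
    isCore_patternSeq ho (hgap o ho)
  exact ⟨patternSeq T P q, map_c_patternSeq,
    fun CL => isCluster_of_mem_patternSeq hT hcam hclose,
    fun CL hCL o ho => (hcore o ho).1 CL hCL,
    fun S₁ => feasibleSeq_of_prefix T hT hcore, hcore⟩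

/-- Lemma 4 of the paper (completeness of MaxGrowth): for every relaxed
co-movement pattern `⟨O, P⟩` there exists a cluster sequence `S` of valid
clusters whose camera route equals `P`, with `O` contained in every cluster's
object set, every nonempty prefix of `S` a feasible sequence, and `O ⊆ λ(S)`. -/
theorem maxGrowth_complete {ι C : Type*} (m k d : ℕ) (ε : ℝ) (hε : 0 ≤ ε)
    (len : ι → ℕ) (cam : ι → ℕ → C) (s : ι → ℕ → ℝ)
    (hs : ∀ (o : ι) (i j : ℕ), i < j → j < len o → s o i < s o j)
    (O : Set ι) (P : List C)
    (hpat : IsPattern m k d ε len cam s O P) :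
    ∃ S : List (Cluster ι C),
      S.map Cluster.c = P ∧
      (∀ CL ∈ S, IsCluster m ε len cam s CL) ∧
      (∀ CL ∈ S, O ⊆ (CL.O : Set ι)) ∧
      (∀ S₁ : List (Cluster ι C), S₁ ≠ [] → S₁ <+: S → FeasibleSeq m d S₁) ∧
      O ⊆ coreSet d S :=
  maxGrowth_complete_general m k d ε len cam s O P hpat
end
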